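/- In the situation of the coordinate change u = z − q with q ∈ 𝕂[x₁,…,xₙ] a nonzero homogeneous polynomial of positive degree: if c!·deg q < o and there exists an element f ∈ J that is z-regular of order c, then o₁ = c!·deg q, and in particular o₁ < o. Here J ⊆ R = 𝕂[[z,x₁,…,xₙ]] is an ideal of order c with 1 ≤ c < ∞, o = ord coeff_{V(z)}(J) and o₁ = ord coeff_{V(u)}(J). -/

import Mathlib

set_option synthInstance.maxHeartbeats 400000
set_option maxHeartbeats 1000000

noncomputable section

/-- The order of an element `g` with respect to an ideal `I`:  `sup {k : ℕ | g ∈ I ^ k}`,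
with value in `ℕ∞` (so that the order of `0` is `⊤`). -/
def elemOrd {A : Type*} [CommRing A] (I : Ideal A) (g : A) : ℕ∞ :=
  sSup ((fun k : ℕ => (k : ℕ∞)) '' {k : ℕ | g ∈ I ^ k})

/-- The order of an ideal `J` with respect to an ideal `I`: `sup {k : ℕ | J ⊆ I ^ k}`. -/
def idealOrd {A : Type*} [CommRing A] (I J : Ideal A) : ℕ∞ :=
  sSup ((fun k : ℕ => (k : ℕ∞)) '' {k : ℕ | J ≤ I ^ k})

/-- The coefficient ideal `K = coeff_{V(z)}(J) = Σ_{i<c} (f_i : f ∈ J)^{c!/(c−i)}` of an ideal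
`J ⊆ R = 𝕂[[z,x₁,…,xₙ]] = Q[[z]]` with respect to the hypersurface `V(z)`, an ideal of
`Q = 𝕂[[x₁,…,xₙ]]`. -/
def coeffIdeal {𝕂 : Type*} [Field 𝕂] {n : ℕ}
    (J : Ideal (PowerSeries (MvPowerSeries (Fin n) 𝕂))) (c : ℕ) :
    Ideal (MvPowerSeries (Fin n) 𝕂) :=
  ∑ i ∈ Finset.range c,
    (Ideal.span ((PowerSeries.coeff (R := MvPowerSeries (Fin n) 𝕂) i) '' J)) ^ (c.factorial / (c - i))

/-- The coefficient ideal `K₁ = coeff_{V(u)}(J) = Σ_{i<c} (f̃_i : f ∈ J)^{c!/(c−i)}` of `J`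
with respect to `V(u)`, computed from a function `E` assigning to each `f ∈ R` the family of
coefficients of its `u`-expansion. -/
def coeffIdealE {𝕂 : Type*} [Field 𝕂] {n : ℕ}
    (E : PowerSeries (MvPowerSeries (Fin n) 𝕂) → ℕ → MvPowerSeries (Fin n) 𝕂)
    (J : Ideal (PowerSeries (MvPowerSeries (Fin n) 𝕂))) (c : ℕ) :
    Ideal (MvPowerSeries (Fin n) 𝕂) :=
  ∑ i ∈ Finset.range c, (Ideal.span ((fun f => E f i) '' J)) ^ (c.factorial / (c - i))

/-- An element `f = Σ_{i≥0} f_i z^i` of `R = Q[[z]]` is `z`-regular of order `c` if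
`f_i(0) = 0` for all `i < c` and `f_c(0) ≠ 0`. -/
def zRegular {𝕂 : Type*} [Field 𝕂] {n : ℕ}
    (f : PowerSeries (MvPowerSeries (Fin n) 𝕂)) (c : ℕ) : Prop :=
  (∀ i < c, MvPowerSeries.constantCoeff (σ := Fin n) (R := 𝕂)
      (PowerSeries.coeff (R := MvPowerSeries (Fin n) 𝕂) i f) = 0) ∧
    MvPowerSeries.constantCoeff (σ := Fin n) (R := 𝕂)
      (PowerSeries.coeff (R := MvPowerSeries (Fin n) 𝕂) c f) ≠ 0

/-!
Write `f = ∑ fⱼ zʲ = ∑ f̃ᵢ uⁱ`. Since the order of power series is multiplicative, `c!·d < ord K`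
forces `ord fⱼ > (c - j)·d` for `j < c`. Giving `z` weight `d`, every `f ∈ J` thus has weighted
order `≥ c·d`, and `u = z - q` is weighted homogeneous, so each `f̃ᵢ uⁱ` has weighted order
`≥ c·d`: `f̃ᵢ ∈ m^((c-i)·d)`, whence `K₁ ⊆ m^(c!·d)`. Substituting `z = q` gives
`f̃₀ = ∑ qʲ fⱼ ≡ q^c f_c` modulo `m^(c·d+1)`. For the `z`-regular `f`, `f_c` is a unit, so `f̃₀`
has order exactly `c·d` and `f̃₀^((c-1)!) ∈ K₁` has order exactly `c!·d`.
-/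

open Finset
open scoped Nat

theorem Ideal.pow_mul_mem_pow_mul_add {R : Type*} [CommSemiring R] {I : Ideal R} {q x : R}
    {d t : ℕ} (hq : q ∈ I ^ d) (hx : x ∈ I ^ t) (j : ℕ) : q ^ j * x ∈ I ^ (j * d + t) := by
  rw [pow_add, mul_comm j, pow_mul]
  exact Ideal.mul_mem_mul (Ideal.pow_mem_pow hq j) hx

theorem Nat.factorial_div_mul_cancel {c i : ℕ} (hi : i < c) : c ! / (c - i) * (c - i) = c ! :=
  Nat.div_mul_cancel (Nat.dvd_factorial (by omega) (Nat.sub_le c i))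

namespace MvPowerSeries

open IsLocalRing

variable {σ 𝕂 : Type*} [Field 𝕂]

theorem mem_maximalIdeal_iff_constantCoeff_eq_zero {f : MvPowerSeries σ 𝕂} :
    f ∈ maximalIdeal (MvPowerSeries σ 𝕂) ↔ constantCoeff f = 0 := by
  rw [mem_maximalIdeal, mem_nonunits_iff, isUnit_iff_constantCoeff, isUnit_iff_ne_zero, not_not]

theorem le_order_of_mem_maximalIdeal_pow {f : MvPowerSeries σ 𝕂} {k : ℕ}
    (hf : f ∈ maximalIdeal (MvPowerSeries σ 𝕂) ^ k) : (k : ℕ∞) ≤ f.order := by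
  induction hf using Submodule.pow_induction_on_left' with
  | algebraMap r => simp
  | add x y i _ _ hx hy => exact (le_min hx hy).trans min_order_le_add
  | mem_mul a ha i x _ hx =>
    calc ((i.succ : ℕ) : ℕ∞) = 1 + i := by push_cast; ring
      _ ≤ a.order + x.order := by
        gcongr
        exact one_le_order_iff_constCoeff_eq_zero.mpr
          (mem_maximalIdeal_iff_constantCoeff_eq_zero.mp ha)
      _ ≤ (a * x).order := le_order_mul

theorem exists_eq_sum_X_mul_of_succ_le_order [Fintype σ] [LinearOrder σ] {R : Type*}
    [CommSemiring R] {f : MvPowerSeries σ R} {k : ℕ} (hf : (k + 1 : ℕ∞) ≤ f.order) :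
    ∃ g : σ → MvPowerSeries σ R, f = ∑ i, X i * g i ∧ ∀ i, (k : ℕ∞) ≤ (g i).order := by
  classical
  -- `X i * g i` collects the monomials of `f` whose smallest variable is `X i`.
  let g : σ → MvPowerSeries σ R := fun i e ↦
    if ∀ j < i, e j = 0 then coeff (e + Finsupp.single i 1) f else 0
  have hg : ∀ i e, coeff e (g i) =
      if ∀ j < i, e j = 0 then coeff (e + Finsupp.single i 1) f else 0 := fun _ _ ↦ rfl
  refine ⟨g, ext fun e ↦ ?_, fun i ↦ le_order fun e he ↦ ?_⟩
  · have hterm : ∀ i, coeff e (X i * g i) =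
        if Finsupp.single i 1 ≤ e ∧ ∀ j < i, e j = 0 then coeff e f else 0 := by
      intro i
      rw [X, coeff_monomial_mul, one_mul]
      by_cases hi : Finsupp.single i 1 ≤ e
      · have hj : ∀ j < i, (e - Finsupp.single i 1 : σ →₀ ℕ) j = e j := fun j hj ↦ by
          simp [hj.ne]
        simp only [hi, hg, tsub_add_cancel_of_le hi, true_and, if_true]
        exact if_congr (forall₂_congr fun j hj' ↦ by rw [hj j hj']) rfl rfl
      · simp [hi]
    rw [map_sum, sum_congr rfl fun i _ ↦ hterm i]
    rcases eq_or_ne e 0 with rfl | he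
    · simp only [nonpos_iff_eq_zero, Finsupp.single_eq_zero, one_ne_zero, false_and, if_false,
        sum_const_zero]
      exact coeff_of_lt_order (lt_of_lt_of_le (by simp) hf)
    · have hsupp : e.support.Nonempty := Finsupp.support_nonempty_iff.mpr he
      have hmin : ∀ i, (Finsupp.single i 1 ≤ e ∧ ∀ j < i, e j = 0) ↔ e.support.min' hsupp = i := by
        intro i
        simp only [min'_eq_iff, Finsupp.single_le_iff, Nat.one_le_iff_ne_zero,
          Finsupp.mem_support_iff]
        exact and_congr_right' ⟨fun h j hj ↦ not_lt.mp fun hlt ↦ hj (h j hlt),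
          fun h j hj ↦ by_contra fun hne ↦ (h j hne).not_gt hj⟩
      simp_rw [hmin, sum_ite_eq, mem_univ, if_true]
  · rw [hg]
    split_ifs
    · exact coeff_of_lt_order (lt_of_lt_of_le (by simpa using he) hf)
    · rfl
theorem mem_maximalIdeal_pow_of_le_order [Finite σ] {f : MvPowerSeries σ 𝕂} {k : ℕ}
    (hf : (k : ℕ∞) ≤ f.order) : f ∈ maximalIdeal (MvPowerSeries σ 𝕂) ^ k := by
  cases nonempty_fintype σ
  let : LinearOrder σ := LinearOrder.lift' _ (Fintype.equivFin σ).injective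
  induction k generalizing f with
  | zero => simp
  | succ k ih =>
    obtain ⟨g, rfl, hg⟩ := exists_eq_sum_X_mul_of_succ_le_order (by exact_mod_cast hf)
    rw [pow_succ']
    refine Ideal.sum_mem _ fun i _ ↦ Ideal.mul_mem_mul ?_ (ih (hg i))
    exact mem_maximalIdeal_iff_constantCoeff_eq_zero.mpr (constantCoeff_X i)

theorem order_pow {R : Type*} [Semiring R] [NoZeroDivisors R] [Nontrivial R]
    (f : MvPowerSeries σ R) (m : ℕ) : (f ^ m).order = m • f.order := by
  induction m with
  | zero => rw [pow_zero, zero_nsmul]; exact weightedOrder_one _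
  | succ m ih => rw [pow_succ, order_mul, ih, succ_nsmul]

theorem succ_le_order_of_le_order_pow {R : Type*} [Semiring R] [NoZeroDivisors R] [Nontrivial R]
    {f : MvPowerSeries σ R} {m s : ℕ} (h : ((m * s + 1 : ℕ) : ℕ∞) ≤ (f ^ m).order) :
    ((s + 1 : ℕ) : ℕ∞) ≤ f.order := by
  rw [order_pow] at h
  generalize f.order = o at h ⊢
  induction o using ENat.recTopCoe with
  | top => exact le_top
  | coe t =>
    rw [nsmul_eq_mul, ← Nat.cast_mul, Nat.cast_le] at h
    exact_mod_cast Nat.lt_of_mul_lt_mul_left (a := m) (by omega)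

theorem order_coe_of_isHomogeneous {R : Type*} [CommSemiring R] {q : MvPolynomial σ R} {d : ℕ}
    (hq0 : q ≠ 0) (hq : q.IsHomogeneous d) : (q : MvPowerSeries σ R).order = d := by
  obtain ⟨e, he⟩ := MvPolynomial.ne_zero_iff.mp hq0
  refine order_eq_nat.mpr ⟨⟨e, by rwa [MvPolynomial.coeff_coe], ?_⟩, fun e' he' ↦ ?_⟩
  · by_contra h
    exact he (hq.coeff_eq_zero h)
  · rw [MvPolynomial.coeff_coe]
    exact hq.coeff_eq_zero he'.ne

end MvPowerSeries

namespace PowerSeries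

variable {Q : Type*} [CommRing Q] (I : Ideal Q) (d : ℕ)

theorem coeff_mul_mem_pow_of_forall_coeff_mem {g h : Q⟦X⟧} {a b : ℕ}
    (hg : ∀ j, coeff j g ∈ I ^ ((a - j) * d)) (hh : ∀ j, coeff j h ∈ I ^ ((b - j) * d)) (j : ℕ) :
    coeff j (g * h) ∈ I ^ ((a + b - j) * d) := by
  rw [coeff_mul]
  refine Ideal.sum_mem _ fun x hx ↦ ?_
  rw [HasAntidiagonal.mem_antidiagonal] at hx
  refine Ideal.pow_le_pow_right ?_ (pow_add I _ _ ▸ Ideal.mul_mem_mul (hg x.1) (hh x.2))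
  rw [← add_mul]
  exact Nat.mul_le_mul_right d (by omega)

/-- The power series of order at least `s * d` when `X` has weight `d` and `I` has weight `1`
(the condition on the `j`-th coefficient is vacuous for `j ≥ s`). -/
def weightedIdeal (s : ℕ) : Ideal Q⟦X⟧ where
  carrier := {g | ∀ j, coeff j g ∈ I ^ ((s - j) * d)}
  add_mem' hg hh j := by rw [map_add]; exact add_mem (hg j) (hh j)
  zero_mem' j := by simp
  smul_mem' r g hg j := by
    simpa using coeff_mul_mem_pow_of_forall_coeff_mem I d (a := 0) (fun _ ↦ by simp) hg j

variable {I d}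

theorem mem_weightedIdeal {s : ℕ} {g : Q⟦X⟧} :
    g ∈ weightedIdeal I d s ↔ ∀ j, coeff j g ∈ I ^ ((s - j) * d) := Iff.rfl

theorem mul_mem_weightedIdeal {a b : ℕ} {g h : Q⟦X⟧} (hg : g ∈ weightedIdeal I d a)
    (hh : h ∈ weightedIdeal I d b) : g * h ∈ weightedIdeal I d (a + b) :=
  coeff_mul_mem_pow_of_forall_coeff_mem I d hg hh

theorem weightedIdeal_antitone : Antitone (weightedIdeal I d) := fun _ _ hab _ hg j ↦
  Ideal.pow_le_pow_right (Nat.mul_le_mul_right d (by omega)) (hg j)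

theorem C_mem_weightedIdeal {s : ℕ} {a : Q} (ha : a ∈ I ^ (s * d)) : C a ∈ weightedIdeal I d s := by
  rintro (_ | j) <;> simp [coeff_C, ha]

theorem X_sub_C_pow_mem_weightedIdeal {q : Q} (hq : q ∈ I ^ d) (k : ℕ) :
    (X - C q) ^ k ∈ weightedIdeal I d k := by
  induction k with
  | zero => intro j; simp
  | succ k ih =>
    refine pow_succ (X - C q) k ▸ mul_mem_weightedIdeal ih ?_
    rintro (_ | _ | j) <;> simp [coeff_X, hq]

theorem mem_weightedIdeal_of_X_sub_C_mul_mem {q : Q} (hq : q ∈ I ^ d) {s : ℕ} {h : Q⟦X⟧}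
    (hh : (X - C q) * h ∈ weightedIdeal I d s) : h ∈ weightedIdeal I d (s - 1) := by
  intro j
  induction ht : s - 1 - j generalizing j with
  | zero => simp
  | succ t ih =>
    have hcoeff : coeff j h = coeff (j + 1) ((X - C q) * h) + q * coeff (j + 1) h := by
      simp [sub_mul, coeff_succ_X_mul, coeff_C_mul]
    rw [hcoeff]
    refine add_mem (by simpa [show s - (j + 1) = t + 1 by omega] using hh (j + 1)) ?_
    simpa [add_mul, add_comm] using Ideal.pow_mul_mem_pow_mul_add hq (ih (j + 1) (by omega)) 1

theorem mem_weightedIdeal_of_X_sub_C_pow_mul_mem {q : Q} (hq : q ∈ I ^ d) {s i : ℕ}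
    {h : Q⟦X⟧}
    (hh : (X - C q) ^ i * h ∈ weightedIdeal I d s) : h ∈ weightedIdeal I d (s - i) := by
  induction i generalizing h with
  | zero => simpa using hh
  | succ i ih =>
    rw [pow_succ, mul_assoc] at hh
    simpa [Nat.sub_sub] using mem_weightedIdeal_of_X_sub_C_mul_mem hq (ih hh)

theorem sum_pow_mul_coeff_C_add_X_sub_C_mul (q e : Q) (h : Q⟦X⟧) (N : ℕ) :
    ∑ j ∈ range (N + 1), q ^ j * coeff j (C e + (X - C q) * h) = e - q ^ (N + 1) * coeff N h := by
  induction N with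
  | zero => simp [coeff_C, sub_eq_add_neg]
  | succ N ih =>
    rw [sum_range_succ, ih]
    simp [sub_mul, coeff_succ_X_mul, coeff_C_mul]
    ring

theorem mem_pow_of_C_add_X_sub_C_mul_mem_weightedIdeal {q : Q} (hq : q ∈ I ^ d) {s : ℕ} {e : Q}
    {h : Q⟦X⟧} (hg : C e + (X - C q) * h ∈ weightedIdeal I d s) : e ∈ I ^ (s * d) := by
  rw [← sub_add_cancel e (q ^ (s + 1) * coeff s h), ← sum_pow_mul_coeff_C_add_X_sub_C_mul]
  refine add_mem (Ideal.sum_mem _ fun j hj ↦ ?_) ?_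
  · have := Ideal.pow_mul_mem_pow_mul_add hq (hg j) j
    rwa [← add_mul, Nat.add_sub_cancel' (by simpa [Nat.lt_succ_iff] using hj)] at this
  · exact Ideal.pow_le_pow_right (by nlinarith)
      (Ideal.pow_mul_mem_pow_mul_add hq (t := 0) (by simp) (s + 1))

def IsTaylorExpansion (q : Q) (f : Q⟦X⟧) (E : ℕ → Q) : Prop :=
  ∀ N, f - ∑ i ∈ range N, C (E i) * (X - C q) ^ i ∈ Ideal.span {(X - C q) ^ N}

variable {q : Q} {f : Q⟦X⟧} {E : ℕ → Q} {c : ℕ}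

theorem IsTaylorExpansion.coeff_mem_pow (hE : IsTaylorExpansion q f E) (hq : q ∈ I ^ d)
    (hf : f ∈ weightedIdeal I d c) (i : ℕ) : E i ∈ I ^ ((c - i) * d) := by
  induction i using Nat.strong_induction_on with
  | _ i ih =>
  obtain ⟨h, hh⟩ := Ideal.mem_span_singleton'.mp (hE (i + 1))
  have hrem : (X - C q) ^ i * (C (E i) + (X - C q) * h) ∈ weightedIdeal I d c := by
    have : (X - C q) ^ i * (C (E i) + (X - C q) * h) =
        f - ∑ k ∈ range i, C (E k) * (X - C q) ^ k := by
      rw [sum_range_succ] at hh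
      linear_combination hh
    rw [this]
    refine sub_mem hf (Ideal.sum_mem _ fun k hk ↦ weightedIdeal_antitone (by omega : c ≤ c - k + k)
      (mul_mem_weightedIdeal (C_mem_weightedIdeal (ih k (mem_range.mp hk)))
        (X_sub_C_pow_mem_weightedIdeal hq k)))
  exact mem_pow_of_C_add_X_sub_C_mul_mem_weightedIdeal hq
    (mem_weightedIdeal_of_X_sub_C_pow_mul_mem hq hrem)

theorem IsTaylorExpansion.sub_pow_mul_coeff_mem (hE : IsTaylorExpansion q f E) (hq : q ∈ I ^ d)
    (hd : 1 ≤ d) (hf : ∀ j < c, coeff j f ∈ I ^ ((c - j) * d + 1)) :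
    E 0 - q ^ c * coeff c f ∈ I ^ (c * d + 1) := by
  obtain ⟨h, hh⟩ := Ideal.mem_span_singleton'.mp (hE 1)
  have key := sum_pow_mul_coeff_C_add_X_sub_C_mul q (E 0) h c
  rw [show C (E 0) + (X - C q) * h = f by simp at hh; linear_combination hh, sum_range_succ] at key
  rw [show E 0 - q ^ c * coeff c f = ∑ j ∈ range c, q ^ j * coeff j f + q ^ (c + 1) * coeff c h
    by linear_combination -key]
  refine add_mem (Ideal.sum_mem _ fun j hj ↦ ?_) ?_
  · have := Ideal.pow_mul_mem_pow_mul_add hq (hf j (mem_range.mp hj)) j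
    rwa [← add_assoc, ← add_mul, Nat.add_sub_cancel' (mem_range.mp hj).le] at this
  · exact Ideal.pow_le_pow_right (by nlinarith)
      (Ideal.pow_mul_mem_pow_mul_add hq (t := 0) (by simp) (c + 1))

end PowerSeries

open IsLocalRing PowerSeries

section CoefficientIdeals

theorem idealOrd_eq_of_le_of_not_le {A : Type*} [CommRing A] {I J : Ideal A} {v : ℕ}
    (hle : J ≤ I ^ v) (hnot : ¬ J ≤ I ^ (v + 1)) : idealOrd I J = v := by
  refine le_antisymm (sSup_le ?_) (le_sSup ⟨v, hle, rfl⟩)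
  rintro _ ⟨k, hk, rfl⟩
  by_contra! hlt
  simp only [Nat.cast_lt] at hlt
  exact hnot (hk.trans (Ideal.pow_le_pow_right hlt))

theorem le_pow_succ_of_lt_idealOrd {A : Type*} [CommRing A] {I J : Ideal A} {v : ℕ}
    (h : (v : ℕ∞) < idealOrd I J) : J ≤ I ^ (v + 1) := by
  obtain ⟨_, ⟨k, hk, rfl⟩, hlt⟩ := lt_sSup_iff.mp h
  simp only [Nat.cast_lt] at hlt
  exact hk.trans (Ideal.pow_le_pow_right hlt)

variable {𝕂 : Type*} [Field 𝕂] {n : ℕ} {J : Ideal (MvPowerSeries (Fin n) 𝕂)⟦X⟧} {c : ℕ}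
  {E : (MvPowerSeries (Fin n) 𝕂)⟦X⟧ → ℕ → MvPowerSeries (Fin n) 𝕂}
  {f : (MvPowerSeries (Fin n) 𝕂)⟦X⟧}

theorem coeff_pow_mem_coeffIdeal (hf : f ∈ J) {j : ℕ} (hj : j < c) :
    coeff j f ^ (c ! / (c - j)) ∈ coeffIdeal J c := by
  have : coeff j f ∈ Ideal.span (coeff j '' (J : Set (MvPowerSeries (Fin n) 𝕂)⟦X⟧)) :=
    Ideal.subset_span ⟨f, hf, rfl⟩
  exact single_le_sum
    (f := fun i ↦ Ideal.span (coeff i '' (J : Set (MvPowerSeries (Fin n) 𝕂)⟦X⟧)) ^ (c ! / (c - i)))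
    (fun _ _ ↦ zero_le) (mem_range.mpr hj) (Ideal.pow_mem_pow this _)

theorem pow_mem_coeffIdealE (hf : f ∈ J) {i : ℕ} (hi : i < c) :
    E f i ^ (c ! / (c - i)) ∈ coeffIdealE E J c := by
  have : E f i ∈ Ideal.span ((fun f ↦ E f i) '' (J : Set _)) := Ideal.subset_span ⟨f, hf, rfl⟩
  exact single_le_sum (f := fun i ↦ Ideal.span ((fun f ↦ E f i) '' (J : Set _)) ^ (c ! / (c - i)))
    (fun _ _ ↦ zero_le) (mem_range.mpr hi) (Ideal.pow_mem_pow this _)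

theorem coeffIdealE_le_pow {I : Ideal (MvPowerSeries (Fin n) 𝕂)} {d : ℕ}
    (h : ∀ f ∈ J, ∀ i < c, E f i ∈ I ^ ((c - i) * d)) : coeffIdealE E J c ≤ I ^ (c ! * d) := by
  refine sum_induction _ (· ≤ I ^ (c ! * d)) (fun _ _ ↦ sup_le) bot_le fun i hi ↦ ?_
  have hspan : Ideal.span ((fun f ↦ E f i) '' J) ≤ I ^ ((c - i) * d) := by
    rw [Ideal.span_le]
    rintro _ ⟨f, hf, rfl⟩
    exact h f hf i (mem_range.mp hi)
  calc Ideal.span ((fun f ↦ E f i) '' J) ^ (c ! / (c - i))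
      ≤ (I ^ ((c - i) * d)) ^ (c ! / (c - i)) := Ideal.pow_right_mono hspan _
    _ = I ^ (c ! * d) := by
      rw [← pow_mul, mul_comm, ← mul_assoc, Nat.factorial_div_mul_cancel (mem_range.mp hi)]

theorem coeff_mem_maximalIdeal_pow_of_lt_idealOrd {d : ℕ}
    (hK : ((c ! * d : ℕ) : ℕ∞) < idealOrd (maximalIdeal (MvPowerSeries (Fin n) 𝕂)) (coeffIdeal J c))
    (hf : f ∈ J) {j : ℕ} (hj : j < c) :
    coeff j f ∈ maximalIdeal (MvPowerSeries (Fin n) 𝕂) ^ ((c - j) * d + 1) := by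
  refine MvPowerSeries.mem_maximalIdeal_pow_of_le_order
    (MvPowerSeries.succ_le_order_of_le_order_pow (m := c ! / (c - j)) ?_)
  have := MvPowerSeries.le_order_of_mem_maximalIdeal_pow
    (le_pow_succ_of_lt_idealOrd hK (coeff_pow_mem_coeffIdeal hf hj))
  rwa [← mul_assoc, Nat.factorial_div_mul_cancel hj]

theorem PowerSeries.IsTaylorExpansion.order_apply_zero {q : MvPolynomial (Fin n) 𝕂} {d : ℕ}
    (hq0 : q ≠ 0) (hqd : q.IsHomogeneous d) (hd : 1 ≤ d) {e : ℕ → MvPowerSeries (Fin n) 𝕂}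
    (he : IsTaylorExpansion (q : MvPowerSeries (Fin n) 𝕂) f e)
    (hf : ∀ j < c, coeff j f ∈ maximalIdeal (MvPowerSeries (Fin n) 𝕂) ^ ((c - j) * d + 1))
    (hfc : MvPowerSeries.constantCoeff (coeff c f) ≠ 0) : (e 0).order = (c * d : ℕ) := by
  have hqord := MvPowerSeries.order_coe_of_isHomogeneous hq0 hqd
  have hfc0 : (coeff c f).order = 0 := by
    by_contra h
    exact hfc (MvPowerSeries.order_ne_zero_iff_constCoeff_eq_zero.mp h)
  have hlead : ((q : MvPowerSeries (Fin n) 𝕂) ^ c * coeff c f).order = (c * d : ℕ) := by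
    rw [MvPowerSeries.order_mul, MvPowerSeries.order_pow, hqord, hfc0]
    simp
  have hrest := MvPowerSeries.le_order_of_mem_maximalIdeal_pow
    (he.sub_pow_mul_coeff_mem (MvPowerSeries.mem_maximalIdeal_pow_of_le_order hqord.ge) hd hf)
  have hlt : ((c * d : ℕ) : ℕ∞) < (e 0 - (q : MvPowerSeries (Fin n) 𝕂) ^ c * coeff c f).order :=
    lt_of_lt_of_le (Nat.cast_lt.mpr (Nat.lt_succ_self _)) hrest
  rw [← add_sub_cancel ((q : MvPowerSeries (Fin n) 𝕂) ^ c * coeff c f) (e 0),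
    MvPowerSeries.order_add_of_order_ne (hlead ▸ hlt.ne), hlead, min_eq_left hlt.le]

end CoefficientIdeals

theorem order_coeff_ideal_after_translation_lt_general {𝕂 : Type*} [Field 𝕂] {n : ℕ}
    (q : MvPolynomial (Fin n) 𝕂) (d : ℕ) (hq0 : q ≠ 0) (hqd : q.IsHomogeneous d) (hd : 1 ≤ d)
    (u : PowerSeries (MvPowerSeries (Fin n) 𝕂))
    (hu : u = PowerSeries.X -
      PowerSeries.C (R := MvPowerSeries (Fin n) 𝕂) (↑q : MvPowerSeries (Fin n) 𝕂))
    (J : Ideal (PowerSeries (MvPowerSeries (Fin n) 𝕂))) (c : ℕ) (hc1 : 1 ≤ c)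
    (E : PowerSeries (MvPowerSeries (Fin n) 𝕂) → ℕ → MvPowerSeries (Fin n) 𝕂)
    (hE : ∀ f : PowerSeries (MvPowerSeries (Fin n) 𝕂), ∀ N : ℕ,
      f - ∑ i ∈ Finset.range N, PowerSeries.C (R := MvPowerSeries (Fin n) 𝕂) (E f i) * u ^ i
        ∈ Ideal.span {u ^ N})
    (hdeg : ((c.factorial * d : ℕ) : ℕ∞)
      < idealOrd (IsLocalRing.maximalIdeal (MvPowerSeries (Fin n) 𝕂)) (coeffIdeal J c))
    (hreg : ∃ f ∈ J, zRegular f c) :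
    idealOrd (IsLocalRing.maximalIdeal (MvPowerSeries (Fin n) 𝕂)) (coeffIdealE E J c)
        = ((c.factorial * d : ℕ) : ℕ∞) ∧
      idealOrd (IsLocalRing.maximalIdeal (MvPowerSeries (Fin n) 𝕂)) (coeffIdealE E J c)
        < idealOrd (IsLocalRing.maximalIdeal (MvPowerSeries (Fin n) 𝕂)) (coeffIdeal J c) := by
  subst hu
  have hT : ∀ f, IsTaylorExpansion (q : MvPowerSeries (Fin n) 𝕂) f (E f) := hE
  obtain ⟨f₀, hf₀, -, hf₀c⟩ := hreg
  have hq : (q : MvPowerSeries (Fin n) 𝕂) ∈ maximalIdeal _ ^ d :=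
    MvPowerSeries.mem_maximalIdeal_pow_of_le_order
      (MvPowerSeries.order_coe_of_isHomogeneous hq0 hqd).ge
  have hK : ∀ f ∈ J, ∀ j < c, coeff j f ∈ maximalIdeal _ ^ ((c - j) * d + 1) :=
    fun f hf j hj ↦ coeff_mem_maximalIdeal_pow_of_lt_idealOrd hdeg hf hj
  have hJ : ∀ f ∈ J, f ∈ weightedIdeal (maximalIdeal _) d c := fun f hf ↦
    mem_weightedIdeal.mpr fun j ↦ by
      rcases lt_or_ge j c with hj | hj
      · exact Ideal.pow_le_pow_right (Nat.le_succ _) (hK f hf j hj)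
      · simp [Nat.sub_eq_zero_of_le hj]
  have hle : coeffIdealE E J c ≤ maximalIdeal _ ^ (c ! * d) :=
    coeffIdealE_le_pow fun f hf i _ ↦ (hT f).coeff_mem_pow hq (hJ f hf) i
  have hnot : ¬ coeffIdealE E J c ≤ maximalIdeal _ ^ (c ! * d + 1) := fun h ↦ by
    have := MvPowerSeries.le_order_of_mem_maximalIdeal_pow (h (pow_mem_coeffIdealE hf₀ hc1))
    have hfac : c ! / (c - 0) * c = c ! := Nat.factorial_div_mul_cancel hc1
    rw [MvPowerSeries.order_pow, (hT f₀).order_apply_zero hq0 hqd hd (hK f₀ hf₀) hf₀c,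
      nsmul_eq_mul, ← Nat.cast_mul, Nat.cast_le, ← mul_assoc, hfac] at this
    omega
  have hord := idealOrd_eq_of_le_of_not_le hle hnot
  exact ⟨hord, hord ▸ hdeg⟩

/-- Coordinate change `u = z − q`, `q` a nonzero homogeneous polynomial of positive degree:
if `c!·deg q < o` and some `f ∈ J` is `z`-regular of order `c`, then `o₁ = c!·deg q`, and in
particular `o₁ < o`. -/
theorem order_coeff_ideal_after_translation_lt {𝕂 : Type*} [Field 𝕂] (p : ℕ)
    (hp : p.Prime) [CharP 𝕂 p] {n : ℕ}
    (q : MvPolynomial (Fin n) 𝕂) (d : ℕ) (hq0 : q ≠ 0) (hqd : q.IsHomogeneous d) (hd : 1 ≤ d)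
    (u : PowerSeries (MvPowerSeries (Fin n) 𝕂))
    (hu : u = PowerSeries.X -
      PowerSeries.C (R := MvPowerSeries (Fin n) 𝕂) (↑q : MvPowerSeries (Fin n) 𝕂))
    (J : Ideal (PowerSeries (MvPowerSeries (Fin n) 𝕂))) (c : ℕ) (hc1 : 1 ≤ c)
    (hc : idealOrd (IsLocalRing.maximalIdeal (PowerSeries (MvPowerSeries (Fin n) 𝕂))) J
      = (c : ℕ∞))
    (E : PowerSeries (MvPowerSeries (Fin n) 𝕂) → ℕ → MvPowerSeries (Fin n) 𝕂)
    (hE : ∀ f : PowerSeries (MvPowerSeries (Fin n) 𝕂), ∀ N : ℕ,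
      f - ∑ i ∈ Finset.range N, PowerSeries.C (R := MvPowerSeries (Fin n) 𝕂) (E f i) * u ^ i
        ∈ Ideal.span {u ^ N})
    (hdeg : ((c.factorial * d : ℕ) : ℕ∞)
      < idealOrd (IsLocalRing.maximalIdeal (MvPowerSeries (Fin n) 𝕂)) (coeffIdeal J c))
    (hreg : ∃ f ∈ J, zRegular f c) :
    idealOrd (IsLocalRing.maximalIdeal (MvPowerSeries (Fin n) 𝕂)) (coeffIdealE E J c)
        = ((c.factorial * d : ℕ) : ℕ∞) ∧
      idealOrd (IsLocalRing.maximalIdeal (MvPowerSeries (Fin n) 𝕂)) (coeffIdealE E J c)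
        < idealOrd (IsLocalRing.maximalIdeal (MvPowerSeries (Fin n) 𝕂)) (coeffIdeal J c) :=
  order_coeff_ideal_after_translation_lt_general q d hq0 hqd hd u hu J c hc1 E hE hdeg hreg
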